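/- arXiv:math/0611365 — 3 statements merged into one kernel-verified Lean document; each statement's English description precedes it below -/
import Mathlib

section
/- Let α ∈ (0,1) be irrational and let k be an even positive integer. Then B_α(k) ≡ ⌊kα⌋ + 1 (mod 2). -/
/-!
Write `k = 2m` and let `S = {q ∈ [1, k) : {qα} < {kα}}`. Since `qα` is never an integer,
`{qα} < {kα}` forces `{(k - q)α} = {kα} - {qα} < {kα}`, so `q ↦ k - q` is an involution of `S`
whose only possible fixed point is `m`. Hence `B_α(k) = #S` is odd exactly when `m ∈ S`, i.e. when
`{mα} < {2mα}`. That happens exactly when `{mα} < 1/2`, i.e. when `⌊kα⌋ = 2⌊mα⌋ + ⌊2{mα}⌋` is even.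
-/

/-- `B α k` counts the integers `q` with `1 ≤ q < k` such that `{qα} < {kα}`. -/
noncomputable def B (α : ℝ) (k : ℕ) : ℕ :=
  ((Finset.Ico 1 k).filter (fun q : ℕ => Int.fract ((q : ℝ) * α) < Int.fract ((k : ℝ) * α))).card

open Finset Int

theorem Finset.even_card_of_involution {ι : Type*} {s : Finset ι} (g : ι → ι)
    (hg_mem : ∀ a ∈ s, g a ∈ s) (hg_inv : ∀ a ∈ s, g (g a) = a) (hg_ne : ∀ a ∈ s, g a ≠ a) :
    Even #s := by
  rw [← ZMod.natCast_eq_zero_iff_even, card_eq_sum_ones, Nat.cast_sum, Nat.cast_one]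
  exact sum_involution (fun a _ ↦ g a) (fun _ _ ↦ by decide) (fun a ha _ ↦ hg_ne a ha) hg_mem hg_inv

theorem Finset.even_card_iff_notMem_of_involution {ι : Type*} [DecidableEq ι] {s : Finset ι}
    {m : ι} (g : ι → ι) (hg_mem : ∀ a ∈ s, g a ∈ s) (hg_inv : ∀ a ∈ s, g (g a) = a)
    (hg_fix : g m = m) (hg_ne : ∀ a ∈ s, a ≠ m → g a ≠ a) :
    Even #s ↔ m ∉ s := by
  have h_erase : Even #(s.erase m) := by
    refine even_card_of_involution g (fun a ha ↦ ?_) (fun a ha ↦ hg_inv a (mem_of_mem_erase ha))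
      (fun a ha ↦ hg_ne a (mem_of_mem_erase ha) (ne_of_mem_erase ha))
    obtain ⟨ham, has⟩ := mem_erase.1 ha
    refine mem_erase.2 ⟨fun h ↦ ham ?_, hg_mem a has⟩
    rw [← hg_inv a has, h, hg_fix]
  by_cases hm : m ∈ s
  · rw [← card_erase_add_one hm]
    simpa [hm, parity_simps] using h_erase
  · simpa [erase_eq_of_notMem hm, hm] using h_erase

namespace Int

variable {R : Type*} [Field R] [LinearOrder R] [IsStrictOrderedRing R] [FloorRing R]

theorem fract_eq_fract_add_sub_fract {a b : R} (h : fract a ≤ fract (a + b)) :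
    fract b = fract (a + b) - fract a := by
  rw [fract_eq_iff]
  refine ⟨sub_nonneg.2 h, (sub_le_self _ (fract_nonneg a)).trans_lt (fract_lt_one _),
    ⌊a + b⌋ - ⌊a⌋, ?_⟩
  rw [← self_sub_floor, ← self_sub_floor a]
  push_cast
  ring

theorem fract_lt_fract_two_mul_iff {x : R} (hx : 0 < fract x) :
    fract x < fract (2 * x) ↔ Even ⌊2 * x⌋ := by
  have h2x : 2 * x = ((2 * ⌊x⌋ : ℤ) : R) + 2 * fract x := by
    conv_lhs => rw [← fract_add_floor x]
    push_cast
    ring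
  rw [h2x, fract_intCast_add, floor_intCast_add]
  rcases lt_or_ge (2 * fract x) 1 with hlt | hge
  · rw [floor_eq_zero_iff.2 ⟨by positivity, hlt⟩, fract_eq_self.2 ⟨by positivity, hlt⟩]
    simp only [add_zero, even_two_mul, iff_true]
    linarith
  · have hfloor : ⌊2 * fract x⌋ = 1 := by
      rw [floor_eq_iff]
      push_cast
      constructor <;> linarith [fract_lt_one x]
    have hfract : fract (2 * fract x) = 2 * fract x - 1 :=
      fract_eq_iff.2 ⟨by linarith, by linarith [fract_lt_one x], 1, by push_cast; ring⟩
    rw [hfract, hfloor, even_add_one]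
    simp only [even_two_mul, not_true_eq_false, iff_false, not_lt]
    linarith [fract_lt_one x]

end Int

section

variable {α : ℝ}

theorem Irrational.fract_natCast_mul_pos (hα : Irrational α) {n : ℕ} (hn : n ≠ 0) :
    0 < fract ((n : ℝ) * α) :=
  fract_pos.2 ((hα.natCast_mul hn).ne_int _)

theorem Irrational.fract_sub_mul_lt_of_fract_mul_lt (hα : Irrational α) {q k : ℕ} (hq : q ≠ 0)
    (hqk : q ≤ k) (h : fract ((q : ℝ) * α) < fract ((k : ℝ) * α)) :
    fract (((k - q : ℕ) : ℝ) * α) < fract ((k : ℝ) * α) := by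
  have hsum : (q : ℝ) * α + ((k - q : ℕ) : ℝ) * α = (k : ℝ) * α := by
    push_cast [Nat.cast_sub hqk]
    ring
  rw [fract_eq_fract_add_sub_fract (hsum ▸ h.le), hsum]
  linarith [hα.fract_natCast_mul_pos hq]

end

theorem stmt_7_general (α : ℝ) (hα : Irrational α)
    (k : ℕ) (hk : 1 ≤ k) (heven : Even k) :
    (B α k : ℤ) ≡ ⌊(k : ℝ) * α⌋ + 1 [ZMOD 2] := by
  obtain ⟨m, rfl⟩ := heven
  set S := (Ico 1 (m + m)).filter
    (fun q : ℕ ↦ fract ((q : ℝ) * α) < fract (((m + m : ℕ) : ℝ) * α))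
  have hkα : ((m + m : ℕ) : ℝ) * α = 2 * ((m : ℝ) * α) := by push_cast; ring
  have h_mid : m ∈ S ↔ Even ⌊((m + m : ℕ) : ℝ) * α⌋ := by
    rw [hkα, ← fract_lt_fract_two_mul_iff (hα.fract_natCast_mul_pos (by omega)), ← hkα]
    simp only [S, mem_filter, mem_Ico]
    exact and_iff_right ⟨by omega, by omega⟩
  have h_card : Even #S ↔ m ∉ S := by
    refine even_card_iff_notMem_of_involution (fun q ↦ m + m - q) (fun q hq ↦ ?_)
      (fun q hq ↦ ?_) (by omega) (fun q hq hqm ↦ ?_) <;>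
      simp only [S, mem_filter, mem_Ico] at hq ⊢
    · exact ⟨by omega, hα.fract_sub_mul_lt_of_fract_mul_lt (by omega) (by omega) hq.2⟩
    · omega
    · omega
  rw [Int.modEq_iff_dvd, ← even_iff_two_dvd, Int.even_sub, Int.even_add_one, Int.even_coe_nat]
  exact (h_card.trans (not_congr h_mid)).symm

theorem stmt_7 (α : ℝ) (hα : Irrational α) (h0 : 0 < α) (h1 : α < 1)
    (k : ℕ) (hk : 1 ≤ k) (heven : Even k) :
    (B α k : ℤ) ≡ ⌊(k : ℝ) * α⌋ + 1 [ZMOD 2] :=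
  stmt_7_general α hα k hk heven
end

section
/- Let α ∈ (0,1) be irrational and let n be a positive integer. Then every factor w ∈ F_n(c_α) has height h(w) equal to either ⌊nα⌋ or ⌊nα⌋ + 1; exactly B_α(n) + 1 of the n+1 factors have height ⌊nα⌋ + 1, and exactly n − B_α(n) of them have height ⌊nα⌋. -/
/-- The characteristic word with slope `α`: `c_α(n) = ⌊(n+2)α⌋ - ⌊(n+1)α⌋`. -/
noncomputable def cword (α : ℝ) (n : ℕ) : ℤ :=
  ⌊((n : ℝ) + 2) * α⌋ - ⌊((n : ℝ) + 1) * α⌋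

/-- The set of factors of length `n` of a word `W : ℕ → ℤ`. -/
def factorSet (W : ℕ → ℤ) (n : ℕ) : Set (Fin n → ℤ) :=
  {v | ∃ i : ℕ, ∀ j : Fin n, v j = W (i + j)}

/-- The height of a finite word: the number of components equal to 1. -/
def height {n : ℕ} (w : Fin n → ℤ) : ℕ :=
  (Finset.univ.filter (fun j : Fin n => w j = 1)).card

/-!
The factor of `c_α` at position `i` is `j ↦ ⌊x + (j + 1)α⌋ - ⌊x + jα⌋` with `x = {(i + 1)α}`, so
its height telescopes to `⌊x + nα⌋ = ⌊nα⌋ + [1 - {nα} ≤ x]`. For `x ∈ [0, 1)` the factor only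
depends on which of the thresholds `1 - {kα}`, `1 ≤ k ≤ n`, lie below `x`; these thresholds are
distinct and cut `[0, 1)` into `n + 1` cells, each of which meets the dense orbit `{(i + 1)α}`.
Hence the factors correspond to the cells. The cells of the taller factors are those to the right
of `1 - {nα}`, i.e. the cells starting at `1 - {kα}` with `{kα} ≤ {nα}`: there are `B_α(n) + 1`.
-/

lemma Int.floor_add_of_mem_Ico {R : Type*} [Field R] [LinearOrder R] [IsStrictOrderedRing R]
    [FloorRing R] {x : R} (hx : x ∈ Set.Ico (0 : R) 1) (y : R) :
    ⌊x + y⌋ = ⌊y⌋ + if 1 - Int.fract y ≤ x then 1 else 0 := by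
  have hsplit : x + y = (x + Int.fract y) + ⌊y⌋ := by rw [Int.fract]; ring
  rw [hsplit, Int.floor_add_intCast, add_comm ⌊y⌋]
  congr 1
  have := Int.fract_nonneg y
  have := Int.fract_lt_one y
  split_ifs with h
  · exact Int.floor_eq_iff.2 ⟨by push_cast; linarith, by push_cast; linarith [hx.2]⟩
  · exact Int.floor_eq_iff.2 ⟨by push_cast; linarith [hx.1], by push_cast; linarith⟩

lemma forall_le_eq_iff_forall_lt_sub_eq {G : Type*} [AddGroup G] {f g : ℕ → G} (h0 : f 0 = g 0)
    (n : ℕ) : (∀ j < n, f (j + 1) - f j = g (j + 1) - g j) ↔ ∀ k ≤ n, f k = g k := by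
  refine ⟨fun h k hk => ?_, fun h j hj => by rw [h j hj.le, h (j + 1) hj]⟩
  induction k with
  | zero => exact h0
  | succ k ih =>
    have hstep := h k hk
    rw [ih (by omega)] at hstep
    exact sub_left_inj.1 hstep

lemma eventually_nhdsGT_le_iff {X : Type*} [TopologicalSpace X] [LinearOrder X] [OrderTopology X]
    (a p : X) : ∀ᶠ y in nhdsWithin p (Set.Ioi p), (a ≤ y ↔ a ≤ p) := by
  rcases le_or_gt a p with h | h
  · filter_upwards [self_mem_nhdsWithin] with y hy using iff_of_true (h.trans (le_of_lt hy)) h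
  · filter_upwards [nhdsWithin_le_nhds (eventually_lt_nhds h)] with y hy
    exact iff_of_false hy.not_ge h.not_ge

lemma Irrational.injective_fract_natCast_mul {α : ℝ} (hα : Irrational α) :
    Function.Injective fun k : ℕ => Int.fract (k * α) := by
  intro j k h
  obtain ⟨z, hz⟩ := Int.fract_eq_fract.1 h
  by_contra hjk
  have hne : (j : ℤ) - k ≠ 0 := sub_ne_zero.2 (Int.natCast_inj.not.2 hjk)
  refine (hα.intCast_mul hne).ne_int z ?_
  push_cast
  linarith

lemma exists_fract_nat_mul_mem_Ioo {α : ℝ} (hα : Irrational α) {a b : ℝ} (ha : 0 ≤ a)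
    (hab : a < b) (hb : b ≤ 1) : ∃ k : ℕ, Int.fract (k * α) ∈ Set.Ioo a b := by
  have hdense : DenseRange fun k : ℕ => k • (α : UnitAddCircle) :=
    denseRange_zsmul_iff_nsmul.1 (AddCircle.denseRange_zsmul_coe_iff.2 (by simpa using hα))
  obtain ⟨k, y, hy, hky⟩ := hdense.exists_mem_open
    (QuotientAddGroup.isOpenMap_coe _ isOpen_Ioo) ((Set.nonempty_Ioo.2 hab).image _)
  refine ⟨k, ?_⟩
  have hy' : y ∈ Set.Ico (0 : ℝ) (0 + 1) := ⟨ha.trans hy.1.le, by linarith [hy.2]⟩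
  have hfract : Int.fract (k * α) ∈ Set.Ico (0 : ℝ) (0 + 1) :=
    ⟨Int.fract_nonneg _, by simpa using Int.fract_lt_one _⟩
  rwa [(AddCircle.coe_eq_coe_iff_of_mem_Ico hfract hy').1]
  rw [AddCircle.coe_fract, ← nsmul_eq_mul, AddCircle.coe_nsmul]
  exact hky.symm

/-- The factor of length `n` of the lower mechanical word of slope `α` and intercept `x`. -/
noncomputable def mechanicalWord (α x : ℝ) (n : ℕ) : Fin n → ℤ :=
  fun j => ⌊x + (j + 1) * α⌋ - ⌊x + j * α⌋

section mechanicalWord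

variable {α x y : ℝ} {n : ℕ}

lemma mechanicalWord_fract (α x : ℝ) (n : ℕ) :
    mechanicalWord α (Int.fract x) n = mechanicalWord α x n := by
  funext j
  simp only [mechanicalWord]
  conv_rhs => rw [← Int.floor_add_fract x, add_assoc, add_assoc, Int.floor_intCast_add,
    Int.floor_intCast_add]
  ring

lemma factorSet_cword (α : ℝ) (n : ℕ) :
    factorSet (cword α) n = Set.range fun i : ℕ => mechanicalWord α ((i + 1) * α) n := by
  have hshift : ∀ i : ℕ, ∀ j : Fin n, cword α (i + j) = mechanicalWord α ((i + 1) * α) n j := by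
    intro i j
    simp only [cword, mechanicalWord]
    push_cast
    ring_nf
  ext w
  simp only [factorSet, Set.mem_ofPred_eq, Set.mem_range, funext_iff, hshift, eq_comm]

lemma sum_mechanicalWord (α x : ℝ) (n : ℕ) :
    ∑ j, mechanicalWord α x n j = ⌊x + n * α⌋ - ⌊x⌋ := by
  refine (Fin.sum_univ_eq_sum_range (fun j : ℕ => ⌊x + (j + 1) * α⌋ - ⌊x + j * α⌋) n).trans ?_
  simpa using Finset.sum_range_sub (fun j : ℕ => ⌊x + j * α⌋) n

lemma mechanicalWord_eq_zero_or_one (h0 : 0 ≤ α) (h1 : α ≤ 1) (j : Fin n) :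
    mechanicalWord α x n j = 0 ∨ mechanicalWord α x n j = 1 := by
  have hmono : ⌊x + j * α⌋ ≤ ⌊x + (j + 1) * α⌋ := Int.floor_le_floor (by linarith)
  have hstep : ⌊x + (j + 1) * α⌋ ≤ ⌊x + j * α⌋ + 1 := by
    rw [← Int.floor_add_one]
    exact Int.floor_le_floor (by linarith)
  simp only [mechanicalWord]
  omega

lemma height_mechanicalWord (h0 : 0 ≤ α) (h1 : α ≤ 1) (hx : x ∈ Set.Ico (0 : ℝ) 1) :
    (height (mechanicalWord α x n) : ℤ) =
      ⌊n * α⌋ + if 1 - Int.fract (n * α) ≤ x then 1 else 0 := by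
  rw [← Int.floor_add_of_mem_Ico hx, ← sub_zero ⌊x + n * α⌋, ← Int.floor_eq_zero_iff.2 hx,
    ← sum_mechanicalWord, height, Finset.card_filter]
  push_cast
  refine Finset.sum_congr rfl fun j _ => ?_
  rcases mechanicalWord_eq_zero_or_one (x := x) h0 h1 j with h | h <;> simp [h]

lemma mechanicalWord_eq_iff (hx : x ∈ Set.Ico (0 : ℝ) 1) (hy : y ∈ Set.Ico (0 : ℝ) 1) :
    mechanicalWord α x n = mechanicalWord α y n ↔
      ∀ k ≤ n, (1 - Int.fract (k * α) ≤ x ↔ 1 - Int.fract (k * α) ≤ y) := by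
  have hfloor := forall_le_eq_iff_forall_lt_sub_eq (f := fun k : ℕ => ⌊x + k * α⌋)
    (g := fun k : ℕ => ⌊y + k * α⌋) (by simp [Int.floor_eq_zero_iff.2 hx,
      Int.floor_eq_zero_iff.2 hy]) n
  rw [funext_iff, Fin.forall_iff]
  simp only [mechanicalWord]
  push_cast at hfloor
  rw [hfloor]
  refine forall₂_congr fun k _ => ?_
  rw [Int.floor_add_of_mem_Ico hx, Int.floor_add_of_mem_Ico hy]
  split_ifs with hxk hyk hyk <;> simp [hxk, hyk]

end mechanicalWord

/-- The left endpoints of the `n + 1` intervals into which the thresholds `1 - {kα}`,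
`1 ≤ k ≤ n`, cut `[0, 1)`. -/
noncomputable def cutPoints (α : ℝ) (n : ℕ) : Finset ℝ :=
  insert 0 ((Finset.Icc 1 n).image fun k : ℕ => 1 - Int.fract (k * α))

section cutPoints

variable {α p : ℝ} {n : ℕ}

lemma mem_cutPoints_Ico (hα : Irrational α) (hp : p ∈ cutPoints α n) :
    p ∈ Set.Ico (0 : ℝ) 1 := by
  rcases Finset.mem_insert.1 hp with rfl | hp
  · exact ⟨le_rfl, one_pos⟩
  obtain ⟨k, hk, rfl⟩ := Finset.mem_image.1 hp
  have hpos : 0 < Int.fract (k * α) :=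
    Int.fract_pos.2 ((hα.natCast_mul (by grind)).ne_int _)
  exact ⟨by linarith [Int.fract_lt_one (k * α)], by linarith⟩

lemma card_cutPoints (hα : Irrational α) (n : ℕ) : (cutPoints α n).card = n + 1 := by
  rw [cutPoints, Finset.card_insert_of_notMem, Finset.card_image_of_injective, Nat.card_Icc,
    Nat.add_sub_cancel]
  · exact fun j k h => hα.injective_fract_natCast_mul (sub_right_injective h)
  · simp only [Finset.mem_image, not_exists, not_and]
    exact fun k _ => (sub_pos.2 (Int.fract_lt_one _)).ne'

lemma card_filter_cutPoints (hα : Irrational α) (hn : 1 ≤ n) :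
    ((cutPoints α n).filter fun p => 1 - Int.fract (n * α) ≤ p).card = B α n + 1 := by
  have hzero : ¬ 1 - Int.fract (n * α) ≤ 0 := by linarith [Int.fract_lt_one (n * α)]
  have hinj : Function.Injective fun k : ℕ => 1 - Int.fract (k * α) :=
    fun j k h => hα.injective_fract_natCast_mul (sub_right_injective h)
  rw [cutPoints, Finset.filter_insert, if_neg hzero, Finset.filter_image,
    Finset.card_image_of_injective _ hinj, ← Finset.Ico_insert_right hn, Finset.filter_insert,
    if_pos le_rfl, Finset.card_insert_of_notMem (by simp), B]
  congr 2
  refine Finset.filter_congr fun k hk => ?_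
  have hne : Int.fract (k * α) ≠ Int.fract (n * α) :=
    hα.injective_fract_natCast_mul.ne (Finset.mem_Ico.1 hk).2.ne
  rw [sub_le_sub_iff_left, le_iff_lt_or_eq, or_iff_left hne]

lemma exists_mem_cutPoints_mechanicalWord_eq (hα : Irrational α) {x : ℝ}
    (hx : x ∈ Set.Ico (0 : ℝ) 1) :
    ∃ p ∈ cutPoints α n, mechanicalWord α p n = mechanicalWord α x n := by
  obtain ⟨p, hp, hmax⟩ := ((cutPoints α n).filter (· ≤ x)).exists_max_image id
    ⟨0, Finset.mem_filter.2 ⟨Finset.mem_insert_self _ _, hx.1⟩⟩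
  rw [Finset.mem_filter] at hp
  refine ⟨p, hp.1, (mechanicalWord_eq_iff (mem_cutPoints_Ico hα hp.1) hx).2 fun k hk => ?_⟩
  rcases Nat.eq_zero_or_pos k with rfl | hk0
  · simp only [Nat.cast_zero, zero_mul, Int.fract_zero, sub_zero]
    exact iff_of_false (mem_cutPoints_Ico hα hp.1).2.not_ge hx.2.not_ge
  · refine ⟨fun h => h.trans hp.2, fun h => hmax _ (Finset.mem_filter.2 ⟨?_, h⟩)⟩
    exact Finset.mem_insert_of_mem (Finset.mem_image_of_mem _ (Finset.mem_Icc.2 ⟨hk0, hk⟩))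

lemma exists_nat_mechanicalWord_eq (hα : Irrational α) (hp : p ∈ cutPoints α n) :
    ∃ i : ℕ, mechanicalWord α ((i + 1) * α) n = mechanicalWord α p n := by
  have hpIco := mem_cutPoints_Ico hα hp
  have hev : ∀ᶠ y in nhdsWithin p (Set.Ioi p), ∀ k ∈ Finset.range (n + 1),
      (1 - Int.fract (k * α) ≤ y ↔ 1 - Int.fract (k * α) ≤ p) :=
    (Filter.eventually_all_finset _).2 fun k _ => eventually_nhdsGT_le_iff _ _
  obtain ⟨u, hpu, hu⟩ := mem_nhdsGT_iff_exists_Ioo_subset.1 hev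
  obtain ⟨k, hk⟩ :=
    exists_fract_nat_mul_mem_Ioo hα hpIco.1 (lt_min hpu hpIco.2) (min_le_right _ _)
  have hk0 : k ≠ 0 := by
    rintro rfl
    simp only [Nat.cast_zero, zero_mul, Int.fract_zero] at hk
    exact hk.1.not_ge hpIco.1
  refine ⟨k - 1, ?_⟩
  rw [← mechanicalWord_fract, ← Nat.cast_add_one,
    Nat.sub_add_cancel (Nat.one_le_iff_ne_zero.2 hk0),
    mechanicalWord_eq_iff ⟨Int.fract_nonneg _, Int.fract_lt_one _⟩ hpIco]
  exact fun j hj => hu ⟨hk.1, hk.2.trans_le (min_le_left _ _)⟩ j (Finset.mem_range.2 (by omega))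

lemma le_of_mechanicalWord_eq (hα : Irrational α) {q : ℝ} (hp : p ∈ cutPoints α n)
    (hq : q ∈ cutPoints α n) (h : mechanicalWord α p n = mechanicalWord α q n) : p ≤ q := by
  have hpIco := mem_cutPoints_Ico hα hp
  rcases Finset.mem_insert.1 hp with rfl | hp'
  · exact (mem_cutPoints_Ico hα hq).1
  obtain ⟨k, hk, rfl⟩ := Finset.mem_image.1 hp'
  exact ((mechanicalWord_eq_iff hpIco (mem_cutPoints_Ico hα hq)).1 h k
    (Finset.mem_Icc.1 hk).2).1 le_rfl

lemma injOn_mechanicalWord_cutPoints (hα : Irrational α) (n : ℕ) :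
    Set.InjOn (mechanicalWord α · n) (cutPoints α n) := fun _ hp _ hq h =>
  (le_of_mechanicalWord_eq hα hp hq h).antisymm (le_of_mechanicalWord_eq hα hq hp h.symm)

lemma factorSet_cword_eq_image (hα : Irrational α) (n : ℕ) :
    factorSet (cword α) n = (mechanicalWord α · n) '' cutPoints α n := by
  rw [factorSet_cword]
  refine subset_antisymm ?_ ?_
  · rintro _ ⟨i, rfl⟩
    dsimp only
    rw [← mechanicalWord_fract]
    exact exists_mem_cutPoints_mechanicalWord_eq hα ⟨Int.fract_nonneg _, Int.fract_lt_one _⟩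
  · rintro _ ⟨p, hp, rfl⟩
    exact exists_nat_mechanicalWord_eq hα hp

lemma ncard_factorSet_height_eq (hα : Irrational α) (n : ℕ) (c : ℤ) :
    {w ∈ factorSet (cword α) n | (height w : ℤ) = c}.ncard =
      ((cutPoints α n).filter fun p => (height (mechanicalWord α p n) : ℤ) = c).card := by
  rw [← Set.ncard_coe_finset, Finset.coe_filter, ← ((injOn_mechanicalWord_cutPoints hα n).mono
    fun p hp => hp.1).ncard_image, factorSet_cword_eq_image hα]
  congr 1
  ext w
  simp only [Set.mem_image, Set.mem_ofPred_eq, Finset.mem_coe]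
  grind

end cutPoints

theorem stmt_10 (α : ℝ) (hα : Irrational α) (h0 : 0 < α) (h1 : α < 1)
    (n : ℕ) (hn : 1 ≤ n) :
    (∀ w ∈ factorSet (cword α) n,
      (height w : ℤ) = ⌊(n : ℝ) * α⌋ ∨ (height w : ℤ) = ⌊(n : ℝ) * α⌋ + 1) ∧
    ({w ∈ factorSet (cword α) n | (height w : ℤ) = ⌊(n : ℝ) * α⌋ + 1}.ncard
        = B α n + 1) ∧
    (({w ∈ factorSet (cword α) n | (height w : ℤ) = ⌊(n : ℝ) * α⌋}.ncard : ℤ)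
        = (n : ℤ) - B α n) := by
  have hheight (p : ℝ) (hp : p ∈ cutPoints α n) :
      (height (mechanicalWord α p n) : ℤ) =
        ⌊n * α⌋ + if 1 - Int.fract (n * α) ≤ p then 1 else 0 :=
    height_mechanicalWord h0.le h1.le (mem_cutPoints_Ico hα hp)
  refine ⟨?_, ?_, ?_⟩
  · rw [factorSet_cword_eq_image hα]
    rintro _ ⟨p, hp, rfl⟩
    rw [hheight p hp]
    split_ifs <;> simp
  · rw [ncard_factorSet_height_eq hα, ← card_filter_cutPoints hα hn]
    congr 1
    refine Finset.filter_congr fun p hp => ?_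
    rw [hheight p hp, add_right_inj]
    split_ifs with h <;> simp [h]
  · rw [ncard_factorSet_height_eq hα]
    have hsplit := Finset.card_filter_add_card_filter_not (s := cutPoints α n)
      (p := fun p => 1 - Int.fract (n * α) ≤ p)
    rw [card_cutPoints hα, card_filter_cutPoints hα hn] at hsplit
    rw [Finset.filter_congr (q := fun p => ¬ 1 - Int.fract (n * α) ≤ p) fun p hp => by
      rw [hheight p hp, add_eq_left]; split_ifs with h <;> simp [h]]
    omega
end

section
/- Let α ∈ (0,1) be irrational and let n be a positive integer. Then 1 + B_α(n) + (n+1)⌊nα⌋ ≡ n (mod 2). -/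
open Finset

namespace Int

variable {R : Type*} [Field R] [LinearOrder R] [IsStrictOrderedRing R] [FloorRing R]

theorem floor_add_add_ite_fract_lt {x y : R} (hy : fract y ≠ 0) :
    ⌊x + y⌋ + (if fract x < fract (x + y) then 1 else 0) = ⌊x⌋ + ⌊y⌋ + 1 := by
  have hy_pos : 0 < fract y := (fract_nonneg y).lt_of_ne' hy
  have hcarry : ((⌊x + y⌋ - ⌊x⌋ - ⌊y⌋ : ℤ) : R) = fract x + fract y - fract (x + y) := by
    push_cast
    linear_combination fract_add_floor (x + y) - fract_add_floor x - fract_add_floor y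
  have hy_lt_one := fract_lt_one y
  have hcarry_nonneg := le_floor_add x y
  have hcarry_le_one := le_floor_add_floor x y
  obtain hc | hc : ⌊x + y⌋ - ⌊x⌋ - ⌊y⌋ = 0 ∨ ⌊x + y⌋ - ⌊x⌋ - ⌊y⌋ = 1 := by omega
  · rw [hc, cast_zero] at hcarry
    rw [if_pos (by linarith)]
    omega
  · rw [hc, cast_one] at hcarry
    rw [if_neg (by linarith)]
    omega

end Int

theorem Irrational.fract_ne_zero {x : ℝ} (hx : Irrational x) : Int.fract x ≠ 0 :=
  Int.fract_ne_zero_iff.mpr fun ⟨m, hm⟩ => hx.ne_int m hm.symm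

theorem B_add_mul_floor (α : ℝ) (hα : Irrational α) (n : ℕ) :
    (B α n : ℤ) + (n - 1 : ℕ) * ⌊(n : ℝ) * α⌋ =
      2 * ∑ q ∈ Ico 1 n, ⌊(q : ℝ) * α⌋ + (n - 1 : ℕ) := by
  have hsplit : ∀ q ∈ Ico 1 n,
      ⌊(n : ℝ) * α⌋ + (if Int.fract ((q : ℝ) * α) < Int.fract ((n : ℝ) * α) then 1 else 0) =
        ⌊(q : ℝ) * α⌋ + ⌊((n - q : ℕ) : ℝ) * α⌋ + 1 := by
    intro q hq
    have hqn : q < n := (mem_Ico.mp hq).2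
    have hnq : (n : ℝ) * α = q * α + ((n - q : ℕ) : ℝ) * α := by
      rw [Nat.cast_sub hqn.le]; ring
    rw [hnq]
    exact Int.floor_add_add_ite_fract_lt (hα.natCast_mul (by omega)).fract_ne_zero
  have hreflect : ∑ q ∈ Ico 1 n, ⌊((n - q : ℕ) : ℝ) * α⌋ = ∑ q ∈ Ico 1 n, ⌊(q : ℝ) * α⌋ := by
    rw [sum_Ico_reflect (fun k => ⌊(k : ℝ) * α⌋) 1 (Nat.le_succ n)]
    simp
  have hsum := sum_congr rfl hsplit
  simp only [sum_add_distrib, sum_const, Nat.card_Ico, sum_boole, hreflect, nsmul_eq_mul,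
    mul_one] at hsum
  rw [B]
  linarith

theorem stmt_13_general (α : ℝ) (hα : Irrational α)
    (n : ℕ) (hn : 1 ≤ n) :
    (1 + (B α n : ℤ) + ((n : ℤ) + 1) * ⌊(n : ℝ) * α⌋) ≡ (n : ℤ) [ZMOD 2] := by
  have hB := B_add_mul_floor α hα n
  rw [Nat.cast_sub hn, Nat.cast_one] at hB
  refine Int.modEq_iff_dvd.mpr ⟨-(∑ q ∈ Ico 1 n, ⌊(q : ℝ) * α⌋ + ⌊(n : ℝ) * α⌋), ?_⟩
  linear_combination -hB

theorem stmt_13 (α : ℝ) (hα : Irrational α) (h0 : 0 < α) (h1 : α < 1)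
    (n : ℕ) (hn : 1 ≤ n) :
    (1 + (B α n : ℤ) + ((n : ℤ) + 1) * ⌊(n : ℝ) * α⌋) ≡ (n : ℤ) [ZMOD 2] :=
  stmt_13_general α hα n hn
end
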